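/- Consider the instance where G is the path (v_1, v_2, v_3, v_4, v_5) and there are two agents with binary additive valuations: Alice approves all five items and Bob approves exactly v_2 and v_3 (nested approval intervals). Then the unique connected allocation maximizing utilitarian social welfare assigns all five items to Alice, Bob's maximin fair share equals 1, and consequently no connected allocation of this instance is both an MMS allocation and a maximizer of utilitarian social welfare among connected allocations. -/
import Mathlib


open Finset

/-- A finite set of items is *connected* in the item graph `G` if the induced
subgraph is preconnected (the empty set counts as connected). -/
def ConnSet {V : Type*} (G : SimpleGraph V) (X : Finset V) : Prop :=
  (G.induce (X : Set V)).Preconnected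

/-- `π` is a connected allocation of the items in `R` among the agents in `N`. -/
def IsConnAllocOn {V N : Type*} [DecidableEq V] (G : SimpleGraph V)
    (R : Finset V) (π : N → Finset V) : Prop :=
  (∀ i, π i ⊆ R) ∧ (∀ i, ConnSet G (π i)) ∧
    (∀ i j, i ≠ j → Disjoint (π i) (π j)) ∧ (∀ v ∈ R, ∃ i, v ∈ π i)

/-- `π` is a connected allocation of all items among the agents in `N`. -/
def IsConnAlloc {V N : Type*} [Fintype V] [DecidableEq V] (G : SimpleGraph V)
    (π : N → Finset V) : Prop :=
  IsConnAllocOn G Finset.univ π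

/-- `π'` is a Pareto-improvement of `π`. -/
def ParetoImproves {V N : Type*} (u : N → Finset V → ℝ)
    (π' π : N → Finset V) : Prop :=
  (∀ i, u i (π i) ≤ u i (π' i)) ∧ ∃ i, u i (π i) < u i (π' i)

/-- `π` is Pareto-optimal: no connected allocation Pareto-improves it. -/
def ParetoOptimal {V N : Type*} [Fintype V] [DecidableEq V] (G : SimpleGraph V)
    (u : N → Finset V → ℝ) (π : N → Finset V) : Prop :=
  ∀ π', IsConnAlloc G π' → ¬ ParetoImproves u π' π

/-- `π` satisfies EF1: any envy can be removed by deleting a single item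
(keeping the envied bundle connected). -/
def EF1 {V N : Type*} [Fintype V] [DecidableEq V] (G : SimpleGraph V)
    (u : N → Finset V → ℝ) (π : N → Finset V) : Prop :=
  ∀ i j, u i (π j) ≤ u i (π i) ∨
    ∃ v ∈ π j, ConnSet G ((π j).erase v) ∧ u i ((π j).erase v) ≤ u i (π i)

/-- The maximin fair share of an agent with valuation `u`, when the items are
divided into `|N|` connected bundles. -/
noncomputable def mmsVal {V : Type*} (N : Type*) [Fintype V] [DecidableEq V]
    (G : SimpleGraph V) (u : Finset V → ℝ) : ℝ :=
  sSup {x : ℝ | ∃ P : N → Finset V, IsConnAlloc G P ∧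
    x = sInf (Set.range fun j => u (P j))}

/-- `π` is an MMS allocation: every agent gets at least her maximin fair share. -/
def IsMMS {V N : Type*} [Fintype V] [DecidableEq V] (G : SimpleGraph V)
    (u : N → Finset V → ℝ) (π : N → Finset V) : Prop :=
  ∀ i, mmsVal N G (u i) ≤ u i (π i)

instance {n : ℕ} : DecidableRel (SimpleGraph.pathGraph n).Adj := fun _ _ =>
  decidable_of_iff _ SimpleGraph.pathGraph_adj.symm

instance {n : ℕ} (X : Finset (Fin n)) : Decidable (ConnSet (SimpleGraph.pathGraph n) X) := by
  unfold ConnSet; infer_instance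

/-- On the path `(v_1,…,v_5)` (encoded as `Fin 5`), where Alice
(agent `0`) approves all five items and Bob (agent `1`) approves exactly
`v_2, v_3`, the unique welfare-maximizing connected allocation gives
everything to Alice, Bob's maximin fair share equals `1`, and no connected
allocation is both MMS and welfare-maximizing. -/
theorem stmt18
    (A : Fin 2 → Finset (Fin 5))
    (hA0 : A 0 = (Finset.univ : Finset (Fin 5)))
    (hA1 : A 1 = ({1, 2} : Finset (Fin 5)))
    (u : Fin 2 → Finset (Fin 5) → ℝ)
    (hu : ∀ i X, u i X = ((X ∩ A i).card : ℝ)) :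
    (∀ π : Fin 2 → Finset (Fin 5), IsConnAlloc (SimpleGraph.pathGraph 5) π →
      (∀ π', IsConnAlloc (SimpleGraph.pathGraph 5) π' →
        ∑ i, u i (π' i) ≤ ∑ i, u i (π i)) →
      π 0 = Finset.univ ∧ π 1 = ∅) ∧
    mmsVal (Fin 2) (SimpleGraph.pathGraph 5) (u 1) = 1 ∧
    ¬ ∃ π : Fin 2 → Finset (Fin 5),
        IsConnAlloc (SimpleGraph.pathGraph 5) π ∧
        IsMMS (SimpleGraph.pathGraph 5) u π ∧
        ∀ π', IsConnAlloc (SimpleGraph.pathGraph 5) π' →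
          ∑ i, u i (π' i) ≤ ∑ i, u i (π i) := by
  have hu0 : ∀ X : Finset (Fin 5), u 0 X = (X.card : ℝ) := by
    intro X; rw [hu, hA0, Finset.inter_univ]
  have hu1 : ∀ X : Finset (Fin 5), u 1 X = ((X ∩ ({1,2} : Finset (Fin 5))).card : ℝ) := by
    intro X; rw [hu, hA1]
  have key : ∀ s : Finset (Fin 5), s ⊆ {1,2} → s = ∅ ∨ s = {1} ∨ s = {2} ∨ s = {1,2} := by
    decide
  have part1 : ∀ π : Fin 2 → Finset (Fin 5), IsConnAlloc (SimpleGraph.pathGraph 5) π →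
      (∀ π', IsConnAlloc (SimpleGraph.pathGraph 5) π' →
        ∑ i, u i (π' i) ≤ ∑ i, u i (π i)) → π 0 = Finset.univ ∧ π 1 = ∅ := by
    intro π hπ hmax
    obtain ⟨hsub, hconn, hdisj, hcov⟩ := hπ
    have hcompl : π 0 = Finset.univ \ π 1 := by
      ext v
      simp only [Finset.mem_sdiff, Finset.mem_univ, true_and]
      constructor
      · intro h0 h1
        exact Finset.disjoint_left.mp (hdisj 0 1 (by decide)) h0 h1
      · intro h1
        obtain ⟨i, hi⟩ := hcov v (Finset.mem_univ v)
        fin_cases i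
        · exact hi
        · exact absurd hi h1
    have hall : IsConnAlloc (SimpleGraph.pathGraph 5)
        (![Finset.univ, ∅] : Fin 2 → Finset (Fin 5)) := by
      refine ⟨fun i => ?_, fun i => ?_, fun i j hij => ?_,
        fun v _ => ⟨0, Finset.mem_univ v⟩⟩
      · fin_cases i <;> simp
      · fin_cases i
        · exact (by decide : ConnSet (SimpleGraph.pathGraph 5) (Finset.univ : Finset (Fin 5)))
        · exact (by decide : ConnSet (SimpleGraph.pathGraph 5) (∅ : Finset (Fin 5)))
      · fin_cases i <;> fin_cases j <;>
          first
            | exact absurd rfl hij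
            | simp
    have h5 := hmax _ hall
    rw [Fin.sum_univ_two, Fin.sum_univ_two] at h5
    simp only [Matrix.cons_val_zero, Matrix.cons_val_one, Matrix.head_cons] at h5
    rw [hu0, hu0, hu1, hu1] at h5
    simp only [Finset.empty_inter, Finset.card_empty, Nat.cast_zero, add_zero,
      Finset.card_univ, Fintype.card_fin] at h5
    have h5' : 5 ≤ (π 0).card + (π 1 ∩ ({1,2} : Finset (Fin 5))).card := by
      exact_mod_cast h5
    have hc1 : (π 1).card ≤ 5 := by
      calc (π 1).card ≤ (Finset.univ : Finset (Fin 5)).card :=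
            Finset.card_le_card (Finset.subset_univ _)
        _ = 5 := by simp
    have hc0 : (π 0).card = 5 - (π 1).card := by
      rw [hcompl, Finset.card_sdiff_of_subset (Finset.subset_univ _)]; simp
    have hle : (π 1 ∩ ({1,2} : Finset (Fin 5))).card ≤ (π 1).card :=
      Finset.card_le_card Finset.inter_subset_left
    have heq : (π 1 ∩ ({1,2} : Finset (Fin 5))).card = (π 1).card := by omega
    have hsub12 : π 1 ⊆ ({1,2} : Finset (Fin 5)) := by
      have h' := Finset.eq_of_subset_of_card_le Finset.inter_subset_left heq.ge
      exact Finset.inter_eq_left.mp h'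
    rcases key _ hsub12 with h | h | h | h
    · rw [h] at hcompl
      refine ⟨?_, h⟩
      rw [hcompl]; simp
    · rw [h] at hcompl
      have h0 : π 0 = ({0,2,3,4} : Finset (Fin 5)) := by rw [hcompl]; decide
      have hcn := hconn 0
      rw [h0] at hcn
      exact absurd hcn (by decide)
    · rw [h] at hcompl
      have h0 : π 0 = ({0,1,3,4} : Finset (Fin 5)) := by rw [hcompl]; decide
      have hcn := hconn 0
      rw [h0] at hcn
      exact absurd hcn (by decide)
    · rw [h] at hcompl
      have h0 : π 0 = ({0,3,4} : Finset (Fin 5)) := by rw [hcompl]; decide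
      have hcn := hconn 0
      rw [h0] at hcn
      exact absurd hcn (by decide)
  have part2 : mmsVal (Fin 2) (SimpleGraph.pathGraph 5) (u 1) = 1 := by
    have hP : IsConnAlloc (SimpleGraph.pathGraph 5)
        (![({0,1} : Finset (Fin 5)), {2,3,4}] : Fin 2 → Finset (Fin 5)) := by
      refine ⟨fun i => Finset.subset_univ _, fun i => ?_, fun i j hij => ?_, fun v _ => ?_⟩
      · fin_cases i
        · exact (by decide : ConnSet (SimpleGraph.pathGraph 5) ({0,1} : Finset (Fin 5)))
        · exact (by decide : ConnSet (SimpleGraph.pathGraph 5) ({2,3,4} : Finset (Fin 5)))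
      · fin_cases i <;> fin_cases j <;>
          first
            | exact absurd rfl hij
            | decide
      · fin_cases v
        · exact ⟨0, by decide⟩
        · exact ⟨0, by decide⟩
        · exact ⟨1, by decide⟩
        · exact ⟨1, by decide⟩
        · exact ⟨1, by decide⟩
    have hval0 : u 1 ({0,1} : Finset (Fin 5)) = 1 := by
      rw [hu1, show ({0,1} : Finset (Fin 5)) ∩ {1,2} = {1} from by decide]; simp
    have hval1 : u 1 ({2,3,4} : Finset (Fin 5)) = 1 := by
      rw [hu1, show ({2,3,4} : Finset (Fin 5)) ∩ {1,2} = {2} from by decide]; simp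
    have hrange : (Set.range fun j : Fin 2 =>
        u 1 ((![({0,1} : Finset (Fin 5)), {2,3,4}] : Fin 2 → Finset (Fin 5)) j))
        = {(1 : ℝ)} := by
      ext x
      constructor
      · rintro ⟨j, rfl⟩
        fin_cases j
        · simpa using hval0
        · simpa using hval1
      · intro hx
        rw [Set.mem_singleton_iff] at hx
        subst hx
        exact ⟨0, by simpa using hval0⟩
    have hmem : (1 : ℝ) ∈ {x : ℝ | ∃ P : Fin 2 → Finset (Fin 5),
        IsConnAlloc (SimpleGraph.pathGraph 5) P ∧
        x = sInf (Set.range fun j => u 1 (P j))} :=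
      ⟨_, hP, by rw [hrange, csInf_singleton]⟩
    have hub : ∀ x ∈ {x : ℝ | ∃ P : Fin 2 → Finset (Fin 5),
        IsConnAlloc (SimpleGraph.pathGraph 5) P ∧
        x = sInf (Set.range fun j => u 1 (P j))}, x ≤ 1 := by
      rintro x ⟨P, ⟨hsubP, hconnP, hdisjP, hcovP⟩, rfl⟩
      have hsum : (P 0 ∩ ({1,2} : Finset (Fin 5))).card
          + (P 1 ∩ ({1,2} : Finset (Fin 5))).card = 2 := by
        have hU : (P 0 ∩ ({1,2} : Finset (Fin 5))) ∪ (P 1 ∩ {1,2})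
            = ({1,2} : Finset (Fin 5)) := by
          ext a
          simp only [Finset.mem_union, Finset.mem_inter]
          constructor
          · rintro (⟨_, ha⟩ | ⟨_, ha⟩) <;> exact ha
          · intro ha
            obtain ⟨i, hi⟩ := hcovP a (Finset.mem_univ a)
            fin_cases i
            · exact Or.inl ⟨hi, ha⟩
            · exact Or.inr ⟨hi, ha⟩
        have hd : Disjoint (P 0 ∩ ({1,2} : Finset (Fin 5))) (P 1 ∩ {1,2}) :=
          (hdisjP 0 1 (by decide)).mono Finset.inter_subset_left Finset.inter_subset_left
        have hcu := Finset.card_union_of_disjoint hd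
        rw [hU] at hcu
        simpa using hcu.symm
      have hbdd : BddBelow (Set.range fun j : Fin 2 => u 1 (P j)) :=
        (Set.finite_range _).bddBelow
      rcases le_or_gt ((P 0 ∩ ({1,2} : Finset (Fin 5))).card) 1 with hc | hc
      · calc sInf (Set.range fun j : Fin 2 => u 1 (P j)) ≤ u 1 (P 0) :=
              csInf_le hbdd (Set.mem_range_self 0)
          _ ≤ 1 := by rw [hu1]; exact_mod_cast hc
      · have hc1 : (P 1 ∩ ({1,2} : Finset (Fin 5))).card ≤ 1 := by omega
        calc sInf (Set.range fun j : Fin 2 => u 1 (P j)) ≤ u 1 (P 1) :=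
              csInf_le hbdd (Set.mem_range_self 1)
          _ ≤ 1 := by rw [hu1]; exact_mod_cast hc1
    exact IsGreatest.csSup_eq ⟨hmem, hub⟩
  refine ⟨part1, part2, ?_⟩
  rintro ⟨π, hπ, hmms, hmax⟩
  obtain ⟨h0, h1⟩ := part1 π hπ hmax
  have hb := hmms 1
  rw [part2, h1, hu1] at hb
  simp at hb
  exact absurd hb (by norm_num)
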